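/- arXiv:2405.12032 — 3 statements merged into one kernel-verified Lean document; each statement's English description precedes it below -/
import Mathlib

section
/- Let m ∈ ℕ, let p_0, …, p_{2^m−1} ∈ [0,1) with ∑_{k=0}^{2^m−1} p_k = 1, let f_k(x) = (x+k)/2^m, and let μ be a Borel probability measure on [0,1] satisfying μ(B) = ∑_{k=0}^{2^m−1} p_k · μ(f_k^{-1}(B)) for every Borel set B ⊆ [0,1]. Then the probability distribution function Φ(x) = μ([0,x]) satisfies Φ(x) = ∑_{k=0}^{2^m−1} [Φ((x+k)/2^m) − Φ(k/2^m)] for every x ∈ [0,1]. -/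
/-!
Apply the invariance relation to `B = [0, f_k(t)]`. The preimage `f_j⁻¹(B)` is the interval
`[-j, t + k - j]`, which for a measure living on `[0,1]` has mass `1` if `j < k`,
mass `Φ(t)` if `j = k`, and mass at most `μ{0}` if `j > k`. Invariance applied to `B = {0}` gives
`μ{0} = p₀ μ{0}`, so `μ{0} = 0` because `p₀ < 1`. Hence `Φ(f_k t) = ∑_{j<k} p_j + p_k Φ(t)`, so
`Φ(f_k x) - Φ(f_k 0) = p_k Φ(x)`, and summing over `k` gives `Φ(x)` because `∑ p_k = 1`.
-/

open MeasureTheory Set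

noncomputable section

def dyadicMap (m k : ℕ) (x : ℝ) : ℝ := (x + k) / 2 ^ m

lemma dyadicMap_preimage_Icc (m k : ℕ) (a b : ℝ) :
    dyadicMap m k ⁻¹' Icc a b = Icc (a * 2 ^ m - k) (b * 2 ^ m - k) := by
  have h2m : (0 : ℝ) < 2 ^ m := by positivity
  ext x
  simp only [dyadicMap, mem_preimage, mem_Icc, le_div_iff₀ h2m, div_le_iff₀ h2m]
  constructor <;> rintro ⟨h₁, h₂⟩ <;> constructor <;> linarith

def IsDyadicIFSInvariant (m : ℕ) (p : ℕ → ℝ) (μ : Measure ℝ) : Prop :=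
  ∀ B ⊆ Icc (0 : ℝ) 1, MeasurableSet B →
    μ B = ∑ k ∈ Finset.range (2 ^ m), ENNReal.ofReal (p k) * μ (dyadicMap m k ⁻¹' B)

lemma IsDyadicIFSInvariant.measureReal_eq {m : ℕ} {p : ℕ → ℝ} {μ : Measure ℝ}
    [IsFiniteMeasure μ] (hinv : IsDyadicIFSInvariant m p μ) (hp : ∀ k < 2 ^ m, 0 ≤ p k)
    {B : Set ℝ} (hB : B ⊆ Icc 0 1) (hBm : MeasurableSet B) :
    μ.real B = ∑ k ∈ Finset.range (2 ^ m), p k * μ.real (dyadicMap m k ⁻¹' B) := by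
  rw [measureReal_def, hinv B hB hBm,
    ENNReal.toReal_sum fun k _ => ENNReal.mul_ne_top ENNReal.ofReal_ne_top (measure_ne_top _ _)]
  refine Finset.sum_congr rfl fun k hk => ?_
  rw [ENNReal.toReal_mul, ENNReal.toReal_ofReal (hp k (Finset.mem_range.1 hk)), measureReal_def]

lemma measureReal_Icc_zero_of_nonpos {μ : Measure ℝ} (h₀ : μ.real {0} = 0) {b : ℝ}
    (hb : b ≤ 0) : μ.real (Icc 0 b) = 0 := by
  rcases hb.lt_or_eq with hb | rfl
  · rw [Icc_eq_empty hb.not_ge, measureReal_empty]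
  · rwa [Icc_self]

section SupportedOnUnitInterval

variable {μ : Measure ℝ} [IsProbabilityMeasure μ]

lemma measureReal_Icc_of_nonpos (hμ : μ (Icc 0 1) = 1) {a : ℝ} (ha : a ≤ 0) (b : ℝ) :
    μ.real (Icc a b) = μ.real (Icc 0 b) := by
  have hconull : μ (Icc 0 1)ᶜ = 0 := (prob_compl_eq_zero_iff measurableSet_Icc).2 hμ
  simp only [measureReal_def, ← measure_inter_conull (s := Icc _ b) hconull, Icc_inter_Icc,
    max_eq_right ha, max_self]

lemma measureReal_Icc_zero_of_one_le (hμ : μ (Icc 0 1) = 1) {b : ℝ} (hb : 1 ≤ b) :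
    μ.real (Icc 0 b) = 1 := by
  refine le_antisymm measureReal_le_one ?_
  calc (1 : ℝ) = μ.real (Icc 0 1) := by rw [measureReal_def, hμ, ENNReal.toReal_one]
    _ ≤ μ.real (Icc 0 b) := measureReal_mono (Icc_subset_Icc_right hb)

variable {m : ℕ} {p : ℕ → ℝ}

lemma measureReal_preimage_dyadicMap_Icc (hμ : μ (Icc 0 1) = 1) (j k : ℕ) (t : ℝ) :
    μ.real (dyadicMap m j ⁻¹' Icc 0 (dyadicMap m k t)) = μ.real (Icc 0 (t + k - j)) := by
  have h2m : (2 : ℝ) ^ m ≠ 0 := by positivity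
  rw [dyadicMap_preimage_Icc, dyadicMap, div_mul_cancel₀ _ h2m, zero_mul, zero_sub,
    measureReal_Icc_of_nonpos hμ (neg_nonpos.2 j.cast_nonneg)]

lemma IsDyadicIFSInvariant.measureReal_singleton_zero (hinv : IsDyadicIFSInvariant m p μ)
    (hp : ∀ k < 2 ^ m, 0 ≤ p k) (hp₀ : p 0 < 1) (hμ : μ (Icc 0 1) = 1) :
    μ.real {0} = 0 := by
  have hfix : μ.real {0} = p 0 * μ.real {0} := by
    have h := hinv.measureReal_eq hp (B := Icc 0 (dyadicMap m 0 0)) (by simp [dyadicMap])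
      measurableSet_Icc
    simp only [measureReal_preimage_dyadicMap_Icc hμ] at h
    rw [Finset.sum_eq_single 0 (fun j _ hj => ?_) (by simp)] at h
    · simpa [dyadicMap] using h
    · have hj : (0 : ℝ) < j := by exact_mod_cast Nat.pos_of_ne_zero hj
      rw [Icc_eq_empty (by push_cast; linarith), measureReal_empty, mul_zero]
  nlinarith [measureReal_nonneg (μ := μ) (s := {0})]

lemma IsDyadicIFSInvariant.measureReal_Icc_zero_dyadicMap
    (hinv : IsDyadicIFSInvariant m p μ)
    (hp : ∀ k < 2 ^ m, 0 ≤ p k) (hμ : μ (Icc 0 1) = 1) (h₀ : μ.real {0} = 0)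
    {k : ℕ} (hk : k < 2 ^ m) {t : ℝ} (ht : t ∈ Icc (0 : ℝ) 1) :
    μ.real (Icc 0 (dyadicMap m k t)) = ∑ j ∈ Finset.range k, p j + p k * μ.real (Icc 0 t) := by
  have hB : Icc 0 (dyadicMap m k t) ⊆ Icc 0 1 := by
    refine Icc_subset_Icc_right ?_
    rw [dyadicMap, div_le_one (by positivity)]
    have : (k : ℝ) + 1 ≤ 2 ^ m := by exact_mod_cast hk
    linarith [ht.2]
  rw [hinv.measureReal_eq hp hB measurableSet_Icc, ← Finset.sum_range_add_sum_Ico _ hk,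
    Finset.sum_range_succ, add_assoc]
  simp only [measureReal_preimage_dyadicMap_Icc hμ]
  congr 1
  · refine Finset.sum_congr rfl fun j hj => ?_
    have : (j : ℝ) + 1 ≤ k := by exact_mod_cast Finset.mem_range.1 hj
    rw [measureReal_Icc_zero_of_one_le hμ (by linarith [ht.1]), mul_one]
  · rw [add_sub_cancel_right, add_eq_left]
    refine Finset.sum_eq_zero fun j hj => ?_
    have : (k : ℝ) + 1 ≤ j := by exact_mod_cast (Finset.mem_Ico.1 hj).1
    rw [measureReal_Icc_zero_of_nonpos h₀ (by linarith [ht.2]), mul_zero]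

end SupportedOnUnitInterval

end

theorem stmt_9_general (m : ℕ) (p : ℕ → ℝ)
    (hp : ∀ k < 2 ^ m, p k ∈ Set.Ico (0:ℝ) 1)
    (hsum : ∑ k ∈ Finset.range (2 ^ m), p k = 1)
    (μ : Measure ℝ) [IsProbabilityMeasure μ] (hμ : μ (Set.Icc (0:ℝ) 1) = 1)
    (hinv : ∀ B ⊆ Set.Icc (0:ℝ) 1, MeasurableSet B →
      μ B = ∑ k ∈ Finset.range (2 ^ m),
        ENNReal.ofReal (p k) * μ ((fun x : ℝ => (x + k) / 2 ^ m) ⁻¹' B))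
    (Φ : ℝ → ℝ) (hΦ : ∀ x, Φ x = (μ (Set.Icc 0 x)).toReal) :
    ∀ x ∈ Set.Icc (0:ℝ) 1,
      Φ x = ∑ k ∈ Finset.range (2 ^ m), (Φ ((x + k) / 2 ^ m) - Φ (k / 2 ^ m)) := by
  have hinv : IsDyadicIFSInvariant m p μ := hinv
  have hnonneg : ∀ k < 2 ^ m, 0 ≤ p k := fun k hk => (hp k hk).1
  have hp₀ : p 0 < 1 := (hp 0 (by positivity)).2
  have h₀ := hinv.measureReal_singleton_zero hnonneg hp₀ hμ
  obtain rfl : Φ = fun x => μ.real (Icc 0 x) := funext hΦ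
  intro x hx
  have hshift : ∀ k ∈ Finset.range (2 ^ m),
      μ.real (Icc 0 ((x + k) / 2 ^ m)) - μ.real (Icc 0 (k / 2 ^ m)) = p k * μ.real (Icc 0 x) := by
    intro k hk
    have hk := Finset.mem_range.1 hk
    have hfx := hinv.measureReal_Icc_zero_dyadicMap hnonneg hμ h₀ hk hx
    have hf0 := hinv.measureReal_Icc_zero_dyadicMap hnonneg hμ h₀ hk (left_mem_Icc.2 zero_le_one)
    rw [measureReal_Icc_zero_of_nonpos h₀ le_rfl, dyadicMap, zero_add] at hf0
    rw [← dyadicMap, hfx, hf0]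
    ring
  rw [Finset.sum_congr rfl hshift, ← Finset.sum_mul, hsum, one_mul]

/-- The distribution function `Φ(x) = μ([0,x])` of an invariant measure for the
IFS `f_k(x) = (x+k)/2^m` with probabilities `p_k` satisfies the self-similarity relation
`Φ(x) = ∑_{k=0}^{2^m−1} [Φ((x+k)/2^m) − Φ(k/2^m)]` on `[0,1]`. -/
theorem stmt_9 (m : ℕ) (hm : 1 ≤ m) (p : ℕ → ℝ)
    (hp : ∀ k < 2 ^ m, p k ∈ Set.Ico (0:ℝ) 1)
    (hsum : ∑ k ∈ Finset.range (2 ^ m), p k = 1)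
    (μ : Measure ℝ) [IsProbabilityMeasure μ] (hμ : μ (Set.Icc (0:ℝ) 1) = 1)
    (hinv : ∀ B ⊆ Set.Icc (0:ℝ) 1, MeasurableSet B →
      μ B = ∑ k ∈ Finset.range (2 ^ m),
        ENNReal.ofReal (p k) * μ ((fun x : ℝ => (x + k) / 2 ^ m) ⁻¹' B))
    (Φ : ℝ → ℝ) (hΦ : ∀ x, Φ x = (μ (Set.Icc 0 x)).toReal) :
    ∀ x ∈ Set.Icc (0:ℝ) 1,
      Φ x = ∑ k ∈ Finset.range (2 ^ m), (Φ ((x + k) / 2 ^ m) - Φ (k / 2 ^ m)) :=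
  stmt_9_general m p hp hsum μ hμ hinv Φ hΦ
end

section
/- Let m ∈ ℕ with m ≥ 2, let p_0, …, p_{2^m−1} ∈ [0,1) with ∑_{k=0}^{2^m−1} p_k = 1, let f_k(x) = (x+k)/2^m, and let μ be a Borel probability measure on [0,1] satisfying μ(B) = ∑_{k=0}^{2^m−1} p_k · μ(f_k^{-1}(B)) for every Borel set B ⊆ [0,1], with probability distribution function Φ(x) = μ([0,x]). Then the function φ : [0,1] → [0,1] defined by φ(x) = (1/m) · ∑_{i=0}^{m−1} ∑_{k=0}^{2^i−1} [Φ((x+k)/2^i) − Φ(k/2^i)] is increasing, continuous, satisfies φ(0) = 0 and φ(1) = 1, and satisfies φ(x) = φ(x/2) + φ((x+1)/2) − φ(1/2) for every x ∈ [0,1] (i.e. φ is a solution of the MW-problem). -/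
/-!
Invariance forces `μ` to have no atoms. The mass of a heaviest atom is a weighted average of the
masses of its preimages `2 ^ m * y - k`, so the finite set of heaviest atoms is mapped into itself
by `y ↦ 2 ^ m * y - k` for every `k` with `p k > 0`; comparing the largest and the smallest heaviest
atom shows that at most one `k` can do this, whereas `p k < 1` forces two such `k`.

Hence `Φ` is the continuous distribution function of `μ`, and invariance on the interval
`(k / 2 ^ m, (x + k) / 2 ^ m]` gives `Φ ((x + k) / 2 ^ m) - Φ (k / 2 ^ m) = p k * Φ x`, that is
`S_m Φ = Φ` on `[0, 1]` for `S_i Φ x = ∑_{k < 2 ^ i} (Φ ((x + k) / 2 ^ i) - Φ (k / 2 ^ i))`.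
Since `S_(i+1) Φ` is the MW-operator `g ↦ g (x / 2) + g ((x + 1) / 2) - g (1 / 2)` applied to
`S_i Φ`, the average of the `m`-periodic orbit `S_0 Φ, …, S_(m-1) Φ` is a fixed point of it.
-/

open MeasureTheory Set Finset ProbabilityTheory

def IsIFSInvariant (m : ℕ) (p : ℕ → ℝ) (μ : Measure ℝ) : Prop :=
  ∀ B ⊆ Icc (0 : ℝ) 1, MeasurableSet B →
    μ B = ∑ k ∈ range (2 ^ m), ENNReal.ofReal (p k) * μ ((fun x : ℝ => (x + k) / 2 ^ m) ⁻¹' B)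

def IsMWSolution (φ : ℝ → ℝ) : Prop :=
  MapsTo φ (Icc 0 1) (Icc 0 1) ∧ MonotoneOn φ (Icc 0 1) ∧ ContinuousOn φ (Icc 0 1) ∧
    φ 0 = 0 ∧ φ 1 = 1 ∧ ∀ x ∈ Icc (0 : ℝ) 1, φ x = φ (x / 2) + φ ((x + 1) / 2) - φ (1 / 2)

noncomputable def dyadicSum (F : ℝ → ℝ) (i : ℕ) (x : ℝ) : ℝ :=
  ∑ k ∈ range (2 ^ i), (F ((x + k) / 2 ^ i) - F (k / 2 ^ i))

section dyadicSum

variable {F : ℝ → ℝ}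

lemma dyadicSum_zero (x : ℝ) : dyadicSum F 0 x = F x - F 0 := by
  simp [dyadicSum]

lemma dyadicSum_apply_zero (i : ℕ) : dyadicSum F i 0 = 0 := by
  simp [dyadicSum]

lemma dyadicSum_apply_one (i : ℕ) : dyadicSum F i 1 = F 1 - F 0 := by
  have hpow : (2 : ℝ) ^ i ≠ 0 := by positivity
  have := Finset.sum_range_sub (fun k : ℕ => F (k / 2 ^ i)) (2 ^ i)
  simp only [Nat.cast_pow, Nat.cast_ofNat, div_self hpow, Nat.cast_zero, zero_div,
    Nat.cast_add, Nat.cast_one] at this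
  simpa only [dyadicSum, add_comm (1 : ℝ)] using this

lemma sum_range_two_mul {M : Type*} [AddCommMonoid M] (n : ℕ) (g : ℕ → M) :
    ∑ j ∈ range (2 * n), g j = ∑ k ∈ range n, (g (2 * k) + g (2 * k + 1)) := by
  induction n with
  | zero => simp
  | succ n ih => rw [Nat.mul_succ, sum_range_succ, sum_range_succ, sum_range_succ, ih, add_assoc]

lemma dyadicSum_succ (i : ℕ) (x : ℝ) :
    dyadicSum F (i + 1) x =
      dyadicSum F i (x / 2) + dyadicSum F i ((x + 1) / 2) - dyadicSum F i (1 / 2) := by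
  simp only [dyadicSum, pow_succ' 2 i, sum_range_two_mul, ← sum_add_distrib, ← sum_sub_distrib]
  refine sum_congr rfl fun k _ => ?_
  push_cast
  ring_nf

lemma Monotone.dyadicSum (hF : Monotone F) (i : ℕ) : Monotone (dyadicSum F i) := fun x y hxy =>
  sum_le_sum fun k _ => sub_le_sub_right (hF (by gcongr)) _

lemma Continuous.dyadicSum (hF : Continuous F) (i : ℕ) : Continuous (dyadicSum F i) :=
  continuous_finsetSum _ fun k _ => (hF.comp (by fun_prop)).sub continuous_const

theorem isMWSolution_of_dyadicSum_eq {m : ℕ} (hm : m ≠ 0) (hmono : Monotone F)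
    (hcont : Continuous F) (h0 : F 0 = 0) (h1 : F 1 = 1)
    (hper : ∀ x ∈ Icc (0 : ℝ) 1, dyadicSum F m x = F x) {φ : ℝ → ℝ}
    (hφ : ∀ x, φ x = (1 / m : ℝ) * ∑ i ∈ range m, dyadicSum F i x) : IsMWSolution φ := by
  have hφ_eq : φ = fun x => (1 / m : ℝ) * ∑ i ∈ range m, dyadicSum F i x := funext hφ
  have hφ_mono : Monotone φ := hφ_eq ▸ fun x y hxy =>
    mul_le_mul_of_nonneg_left (sum_le_sum fun i _ => hmono.dyadicSum i hxy) (by positivity)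
  have hφ0 : φ 0 = 0 := by simp [hφ, dyadicSum_apply_zero]
  have hφ1 : φ 1 = 1 := by
    have : (m : ℝ) ≠ 0 := Nat.cast_ne_zero.2 hm
    simp [hφ, dyadicSum_apply_one, h0, h1, this]
  have hφ_cont : Continuous φ :=
    hφ_eq ▸ continuous_const.mul (continuous_finsetSum _ fun i _ => hcont.dyadicSum i)
  refine ⟨fun x hx => ⟨hφ0 ▸ hφ_mono hx.1, hφ1 ▸ hφ_mono hx.2⟩, hφ_mono.monotoneOn _,
    hφ_cont.continuousOn, hφ0, hφ1, fun x hx => ?_⟩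
  have hshift : ∑ i ∈ range m, dyadicSum F (i + 1) x = ∑ i ∈ range m, dyadicSum F i x := by
    have := sum_range_succ' (fun i => dyadicSum F i x) m
    rw [sum_range_succ, hper x hx, dyadicSum_zero, h0, sub_zero] at this
    linarith
  rw [hφ, hφ, hφ, hφ, ← hshift, ← mul_add, ← mul_sub, ← sum_add_distrib, ← sum_sub_distrib]
  simp only [dyadicSum_succ]

end dyadicSum

lemma eq_of_weighted_sum_eq_of_le {ι : Type*} {s : Finset ι} {w f : ι → ℝ} {c : ℝ}
    (hw : ∀ i ∈ s, 0 ≤ w i) (hw1 : ∑ i ∈ s, w i = 1) (hf : ∀ i ∈ s, f i ≤ c)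
    (h : ∑ i ∈ s, w i * f i = c) {j : ι} (hj : j ∈ s) (hwj : 0 < w j) : f j = c := by
  have hgap : ∑ i ∈ s, w i * (c - f i) = 0 := by
    simp only [mul_sub, sum_sub_distrib, ← sum_mul, hw1, one_mul, h, sub_self]
  have hgap_j := (sum_eq_zero_iff_of_nonneg fun i hi =>
    mul_nonneg (hw i hi) (sub_nonneg.2 (hf i hi))).1 hgap j hj
  linarith [(mul_eq_zero.1 hgap_j).resolve_left hwj.ne']

lemma exists_ne_pos_of_sum_eq_one {ι : Type*} [DecidableEq ι] {s : Finset ι} {w : ι → ℝ}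
    (hw : ∀ i ∈ s, w i ∈ Ico (0 : ℝ) 1) (h : ∑ i ∈ s, w i = 1) :
    ∃ i ∈ s, ∃ j ∈ s, i ≠ j ∧ 0 < w i ∧ 0 < w j := by
  obtain ⟨i, hi, hwi⟩ : ∃ i ∈ s, 0 < w i := by
    by_contra! H
    linarith [sum_nonpos H]
  obtain ⟨j, hj, hwj⟩ : ∃ j ∈ s.erase i, 0 < w j := by
    by_contra! H
    linarith [sum_nonpos H, sum_erase_add s w hi, (hw i hi).2]
  exact ⟨i, hi, j, mem_of_mem_erase hj, (ne_of_mem_erase hj).symm, hwi, hwj⟩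

lemma eq_of_mapsTo_mul_sub {A : Set ℝ} (hA : A.Finite) (hne : A.Nonempty) {c a b : ℝ}
    (hc : 1 ≤ c) (ha : MapsTo (fun y => c * y - a) A A) (hb : MapsTo (fun y => c * y - b) A A) :
    a = b := by
  obtain ⟨M, hM, hM_max⟩ := exists_max_image A id hA hne
  obtain ⟨m₀, hm₀, hm₀_min⟩ := exists_min_image A id hA hne
  have h_eq : ∀ t, MapsTo (fun y => c * y - t) A A → t = (c - 1) * M := by
    intro t ht
    have h₁ : c * M - t ≤ M := hM_max _ (ht hM)
    have h₂ : m₀ ≤ c * m₀ - t := hm₀_min _ (ht hm₀)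
    have h₃ : m₀ ≤ M := hM_max _ hm₀
    nlinarith
  rw [h_eq a ha, h_eq b hb]

lemma preimage_add_div_Ioc {c : ℝ} (hc : 0 < c) (a b j : ℝ) :
    (fun y : ℝ => (y + j) / c) ⁻¹' Ioc (a / c) (b / c) = Ioc (a - j) (b - j) := by
  ext y
  simp [div_lt_div_iff_of_pos_right hc, div_le_div_iff_of_pos_right hc, sub_lt_iff_lt_add,
    le_sub_iff_add_le]

section Measure

variable {μ : Measure ℝ}

lemma finite_setOf_le_measureReal_singleton [IsFiniteMeasure μ] {ε : ℝ} (hε : 0 < ε) :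
    {x | ε ≤ μ.real {x}}.Finite :=
  (Measure.finite_const_le_meas_of_disjoint_iUnion μ (ENNReal.ofReal_pos.2 hε)
    (As := fun x : ℝ => {x}) (fun _ => measurableSet_singleton _)
    (fun _ _ hab => disjoint_singleton.2 hab) (measure_ne_top μ _)).subset fun _ hx =>
    (ENNReal.ofReal_le_iff_le_toReal (measure_ne_top μ _)).2 hx

lemma measure_compl_Ioc_eq_zero [IsProbabilityMeasure μ] [NullSingletonClass μ] {a b : ℝ}
    (hμ : μ (Icc a b) = 1) : μ (Ioc a b)ᶜ = 0 :=
  (measure_congr Ioc_ae_eq_Icc.compl).trans ((prob_compl_eq_zero_iff measurableSet_Icc).2 hμ)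

lemma continuous_cdf [IsProbabilityMeasure μ] [NullSingletonClass μ] : Continuous (cdf μ) := by
  refine continuous_iff_continuousAt.2 fun x => continuousAt_iff_continuous_left_right.2
    ⟨?_, (cdf μ).right_continuous x⟩
  have hleft : Function.leftLim (cdf μ) x = cdf μ x := by
    have h := (cdf μ).measure_singleton x
    rw [measure_cdf, measure_singleton, eq_comm, ENNReal.ofReal_eq_zero, sub_nonpos] at h
    exact le_antisymm ((monotone_cdf μ).leftLim_le le_rfl) h
  exact continuousWithinAt_Iio_iff_Iic.1
    ((monotone_cdf μ).continuousWithinAt_Iio_iff_leftLim_eq.2 hleft)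

lemma cdf_sub_cdf [IsProbabilityMeasure μ] {a b : ℝ} (hab : a ≤ b) :
    cdf μ b - cdf μ a = μ.real (Ioc a b) := by
  have h := (cdf μ).measure_Ioc a b
  rw [measure_cdf] at h
  rw [measureReal_def, h, ENNReal.toReal_ofReal (sub_nonneg.2 (monotone_cdf μ hab))]

lemma cdf_eq_measureReal_Icc [IsProbabilityMeasure μ] (hμ : μ (Iio 0) = 0) (x : ℝ) :
    cdf μ x = μ.real (Icc 0 x) := by
  rw [cdf_eq_real, measureReal_def, measureReal_def, ← measure_sdiff_null hμ]
  congr 2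
  ext y
  simp [and_comm]

variable {m : ℕ} {p : ℕ → ℝ}

lemma IsIFSInvariant.measureReal_singleton [IsFiniteMeasure μ] (hinv : IsIFSInvariant m p μ)
    (hp : ∀ k < 2 ^ m, 0 ≤ p k) {x : ℝ} (hx : x ∈ Icc (0 : ℝ) 1) :
    μ.real {x} = ∑ k ∈ range (2 ^ m), p k * μ.real {2 ^ m * x - k} := by
  have hpre : ∀ k : ℕ, (fun y : ℝ => (y + k) / 2 ^ m) ⁻¹' {x} = {2 ^ m * x - k} := by
    intro k
    ext y
    simp only [Set.mem_preimage, mem_singleton_iff]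
    rw [div_eq_iff (by positivity)]
    constructor <;> intro h <;> linarith
  rw [measureReal_def, hinv {x} (singleton_subset_iff.2 hx) (measurableSet_singleton x),
    ENNReal.toReal_sum fun k _ => by finiteness]
  refine sum_congr rfl fun k hk => ?_
  rw [hpre, ENNReal.toReal_mul, ENNReal.toReal_ofReal (hp k (mem_range.1 hk)), measureReal_def]

theorem IsIFSInvariant.nullSingletonClass [IsProbabilityMeasure μ] (hinv : IsIFSInvariant m p μ)
    (hp : ∀ k < 2 ^ m, p k ∈ Ico (0 : ℝ) 1) (hsum : ∑ k ∈ range (2 ^ m), p k = 1)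
    (hμ : μ (Icc (0 : ℝ) 1) = 1) : NullSingletonClass μ := by
  refine ⟨fun x₀ => ?_⟩
  by_contra h₀
  have hx₀ : 0 < μ.real {x₀} := ENNReal.toReal_pos h₀ (measure_ne_top μ _)
  obtain ⟨z, hz, hz_max⟩ := exists_max_image _ (fun y => μ.real {y})
    (finite_setOf_le_measureReal_singleton hx₀) ⟨x₀, le_refl (μ.real {x₀})⟩
  have hle : ∀ y, μ.real {y} ≤ μ.real {z} := fun y =>
    (le_total (μ.real {x₀}) (μ.real {y})).elim (hz_max y) fun h => h.trans hz
  have hz_pos : 0 < μ.real {z} := hx₀.trans_le hz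
  set A := {y | μ.real {y} = μ.real {z}}
  have hA_fin : A.Finite :=
    (finite_setOf_le_measureReal_singleton hz_pos).subset fun y hy => hy.ge
  have hA_sub : A ⊆ Icc 0 1 := by
    intro y hy
    by_contra hy'
    have hy₀ : μ {y} = 0 := measure_mono_null (singleton_subset_iff.2 hy')
      ((prob_compl_eq_zero_iff measurableSet_Icc).2 hμ)
    have : μ.real {y} = 0 := by rw [measureReal_def, hy₀, ENNReal.toReal_zero]
    exact hz_pos.ne' (hy.symm.trans this)
  have hmaps : ∀ k < 2 ^ m, 0 < p k → MapsTo (fun y : ℝ => 2 ^ m * y - k) A A := by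
    intro k hk hpk y hy
    refine eq_of_weighted_sum_eq_of_le (f := fun j : ℕ => μ.real {2 ^ m * y - j})
      (fun j hj => (hp j (mem_range.1 hj)).1) hsum (fun j _ => hle _) ?_ (mem_range.2 hk) hpk
    rw [← hinv.measureReal_singleton (fun j hj => (hp j hj).1) (hA_sub hy)]
    exact hy
  obtain ⟨a, ha, b, hb, hab, hpa, hpb⟩ :=
    exists_ne_pos_of_sum_eq_one (fun k hk => hp k (mem_range.1 hk)) hsum
  exact hab (Nat.cast_injective (R := ℝ) (eq_of_mapsTo_mul_sub hA_fin ⟨z, rfl⟩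
    (one_le_pow₀ one_le_two) (hmaps a (mem_range.1 ha) hpa) (hmaps b (mem_range.1 hb) hpb)))

-- Only the branch `f_k` meets `(k / 2 ^ m, (x + k) / 2 ^ m]` in a set of positive measure.
lemma IsIFSInvariant.measure_Ioc [IsProbabilityMeasure μ] [NullSingletonClass μ]
    (hinv : IsIFSInvariant m p μ) (hμ : μ (Icc (0 : ℝ) 1) = 1) {x : ℝ} (hx : x ∈ Icc (0 : ℝ) 1)
    {k : ℕ} (hk : k < 2 ^ m) :
    μ (Ioc (k / 2 ^ m) ((x + k) / 2 ^ m)) = ENNReal.ofReal (p k) * μ (Ioc 0 x) := by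
  have hpow : (0 : ℝ) < 2 ^ m := by positivity
  have hk' : (k : ℝ) + 1 ≤ 2 ^ m := by exact_mod_cast hk
  have hsub : Ioc ((k : ℝ) / 2 ^ m) ((x + k) / 2 ^ m) ⊆ Icc 0 1 :=
    Ioc_subset_Icc_self.trans <| Icc_subset_Icc (by positivity) <|
      (div_le_one (by positivity)).2 (by linarith [hx.2])
  rw [hinv _ hsub measurableSet_Ioc, sum_eq_single_of_mem k (mem_range.2 hk)]
  · rw [preimage_add_div_Ioc hpow, sub_self, add_sub_cancel_right]
  · intro j _ hjk
    rw [preimage_add_div_Ioc hpow,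
      measure_mono_null _ (measure_compl_Ioc_eq_zero hμ), mul_zero]
    rintro y ⟨hy₁, hy₂⟩ ⟨hy₃, hy₄⟩
    have hkj : k < j + 1 := by exact_mod_cast (by linarith : (k : ℝ) < j + 1)
    have hjk' : j < k + 1 := by exact_mod_cast (by linarith [hx.2] : (j : ℝ) < k + 1)
    omega

lemma IsIFSInvariant.dyadicSum_cdf [IsProbabilityMeasure μ] [NullSingletonClass μ]
    (hinv : IsIFSInvariant m p μ) (hp : ∀ k < 2 ^ m, 0 ≤ p k)
    (hsum : ∑ k ∈ range (2 ^ m), p k = 1) (hμ : μ (Icc (0 : ℝ) 1) = 1) {x : ℝ}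
    (hx : x ∈ Icc (0 : ℝ) 1) : dyadicSum (cdf μ) m x = cdf μ x := by
  have hcdf_zero : cdf μ 0 = 0 := by
    rw [cdf_eq_real, measureReal_def, measure_mono_null
      (show Iic (0 : ℝ) ⊆ (Ioc 0 1)ᶜ from fun y hy hy' => absurd hy'.1 (not_lt.2 hy))
      (measure_compl_Ioc_eq_zero hμ), ENNReal.toReal_zero]
  calc dyadicSum (cdf μ) m x = ∑ k ∈ range (2 ^ m), p k * cdf μ x := by
        refine sum_congr rfl fun k hk => ?_
        rw [cdf_sub_cdf (by gcongr; linarith [hx.1]), measureReal_def,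
          hinv.measure_Ioc hμ hx (mem_range.1 hk), ENNReal.toReal_mul,
          ENNReal.toReal_ofReal (hp k (mem_range.1 hk)), ← measureReal_def, ← cdf_sub_cdf hx.1,
          hcdf_zero, sub_zero]
    _ = cdf μ x := by rw [← sum_mul, hsum, one_mul]

end Measure

/-- For `m ≥ 2` and an invariant measure `μ` of the IFS `f_k(x) = (x+k)/2^m`
with probabilities `p_k ∈ [0,1)` summing to `1`, the function
`φ(x) = (1/m) ∑_{i=0}^{m−1} ∑_{k=0}^{2^i−1} [Φ((x+k)/2^i) − Φ(k/2^i)]`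
is a solution of the MW-problem. -/
theorem stmt_10 (m : ℕ) (hm : 2 ≤ m) (p : ℕ → ℝ)
    (hp : ∀ k < 2 ^ m, p k ∈ Set.Ico (0:ℝ) 1)
    (hsum : ∑ k ∈ Finset.range (2 ^ m), p k = 1)
    (μ : Measure ℝ) [IsProbabilityMeasure μ] (hμ : μ (Set.Icc (0:ℝ) 1) = 1)
    (hinv : ∀ B ⊆ Set.Icc (0:ℝ) 1, MeasurableSet B →
      μ B = ∑ k ∈ Finset.range (2 ^ m),
        ENNReal.ofReal (p k) * μ ((fun x : ℝ => (x + k) / 2 ^ m) ⁻¹' B))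
    (Φ : ℝ → ℝ) (hΦ : ∀ x, Φ x = (μ (Set.Icc 0 x)).toReal)
    (φ : ℝ → ℝ)
    (hφ : ∀ x, φ x = (1 / m : ℝ) * ∑ i ∈ Finset.range m, ∑ k ∈ Finset.range (2 ^ i),
      (Φ ((x + k) / 2 ^ i) - Φ (k / 2 ^ i))) :
    Set.MapsTo φ (Set.Icc (0:ℝ) 1) (Set.Icc (0:ℝ) 1) ∧
    MonotoneOn φ (Set.Icc (0:ℝ) 1) ∧
    ContinuousOn φ (Set.Icc (0:ℝ) 1) ∧
    φ 0 = 0 ∧ φ 1 = 1 ∧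
    ∀ x ∈ Set.Icc (0:ℝ) 1, φ x = φ (x / 2) + φ ((x + 1) / 2) - φ (1 / 2) := by
  have hinv : IsIFSInvariant m p μ := hinv
  have : NullSingletonClass μ := hinv.nullSingletonClass hp hsum hμ
  have hΦ_cdf : Φ = cdf μ := funext fun x => by
    rw [hΦ, cdf_eq_measureReal_Icc (measure_mono_null
      (show Iio (0 : ℝ) ⊆ (Ioc 0 1)ᶜ from fun y hy hy' => lt_asymm hy hy'.1)
      (measure_compl_Ioc_eq_zero hμ)), measureReal_def]
  subst hΦ_cdf
  refine isMWSolution_of_dyadicSum_eq (by omega) (monotone_cdf μ) continuous_cdf ?_ ?_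
    (fun x hx => hinv.dyadicSum_cdf (fun k hk => (hp k hk).1) hsum hμ hx) hφ
  · rw [hΦ, Set.Icc_self, measure_singleton, ENNReal.toReal_zero]
  · rw [hΦ, hμ, ENNReal.toReal_one]
end

section
/- Let m ∈ ℕ with m ≥ 2, let p ∈ (0,1), let f_k(x) = (x+k)/2^m for k ∈ {0,…,2^m−1}, and let μ be a Borel probability measure on [0,1] satisfying μ(B) = p · μ(f_{2^m−2}^{-1}(B)) + (1−p) · μ(f_{2^m−1}^{-1}(B)) for every Borel set B ⊆ [0,1], with probability distribution function Φ(x) = μ([0,x]). Define φ(x) = (1/m) · ∑_{i=0}^{m−1} ∑_{k=0}^{2^i−1} [Φ((x+k)/2^i) − Φ(k/2^i)]. Then φ(x) = 0 if and only if x ∈ [0, (2^m − 2^{m−1} − 1)/(2^m − 1)]. -/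
/-!
With `N = 2 ^ m`, the attractor of the two maps carrying the weight lies in `[a, 1]`, where
`a = (N - 2) / (N - 1)` is the fixed point of `x ↦ (x + N - 2) / N`. Invariance gives
`μ [0, a] = p μ [0, a]`, so `μ [0, a] = 0`; and pulling `[a, c]` back by that map stretches it
by `N` about `a`, so no `[a, c]` with `c > a` is null. Hence `Φ` vanishes exactly on `(-∞, a]`.
Every argument of `Φ` in `φ x` is at most `(x + 2 ^ (m-1) - 1) / 2 ^ (m-1)`, which is attained,
so `φ x = 0` iff this point is `≤ a`, i.e. `x ≤ (2 ^ m - 2 ^ (m-1) - 1) / (2 ^ m - 1)`.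
-/

open MeasureTheory Set

theorem preimage_add_div_Icc {N : ℝ} (hN : 0 < N) (c u v : ℝ) :
    (fun x : ℝ => (x + c) / N) ⁻¹' Icc u v = Icc (N * u - c) (N * v - c) := by
  ext x
  simp only [mem_preimage, mem_Icc, le_div_iff₀ hN, div_le_iff₀ hN]
  constructor <;> rintro ⟨h₁, h₂⟩ <;> constructor <;> linarith

theorem ENNReal.eq_zero_of_le_mul_self {e q : ENNReal} (hq : q < 1) (he : e ≠ ⊤)
    (h : e ≤ q * e) : e = 0 := by
  by_contra h₀
  have : q * e < 1 * e := ENNReal.mul_lt_mul_left h₀ he hq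
  exact (h.trans_lt this).ne (one_mul e).symm

theorem of_le_imp_of_imp_mul {P : ℝ → Prop} {N r d : ℝ} (hN : 1 < N) (hr : 0 ≤ r) (hd : 0 < d)
    (hdown : ∀ x y, y ≤ x → P x → P y) (hstep : ∀ x ≤ r, P x → P (N * x)) (h : P d) : P r := by
  have hiter : ∀ n : ℕ, P (min (N ^ n * d) r) := by
    intro n
    induction n with
    | zero => exact hdown d _ (by simp) h
    | succ n ih =>
      refine hdown _ _ ?_ (hstep _ (min_le_right _ _) ih)
      rw [mul_min_of_nonneg _ _ (by linarith), pow_succ', mul_assoc]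
      exact min_le_min le_rfl (le_mul_of_one_le_left hr hN.le)
  obtain ⟨n, hn⟩ := pow_unbounded_of_one_lt (r / d) hN
  rw [div_lt_iff₀ hd] at hn
  simpa [hn.le] using hiter n

/-- `μ` is invariant for the maps `x ↦ (x + N - 2) / N`, `x ↦ (x + N - 1) / N` with weights `p`,
`1 - p`: for `N = 2 ^ m` this is the IFS `(f_k)` with probability vector `(0, …, 0, p, 1 - p)`. -/
def IsInvariantTopTwoMaps (μ : Measure ℝ) (N p : ℝ) : Prop :=
  ∀ B ⊆ Icc (0 : ℝ) 1, MeasurableSet B →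
    μ B = ENNReal.ofReal p * μ ((fun x : ℝ => (x + (N - 2)) / N) ⁻¹' B)
      + ENNReal.ofReal (1 - p) * μ ((fun x : ℝ => (x + (N - 1)) / N) ⁻¹' B)

section InvariantMeasure

variable {μ : Measure ℝ} [IsProbabilityMeasure μ] {N p : ℝ}

theorem measure_le_of_inter_Icc_subset (hμ : μ (Icc 0 1) = 1) {s t : Set ℝ}
    (h : s ∩ Icc 0 1 ⊆ t) : μ s ≤ μ t := by
  rw [← measure_inter_conull ((prob_compl_eq_zero_iff measurableSet_Icc).mpr hμ)]
  exact measure_mono h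

theorem fixedPoint_mem_Ico (hN : 2 ≤ N) : (N - 2) / (N - 1) ∈ Ico (0 : ℝ) 1 :=
  ⟨div_nonneg (by linarith) (by linarith), (div_lt_one (by linarith)).mpr (by linarith)⟩

theorem IsInvariantTopTwoMaps.measure_Icc_zero_fixedPoint (hμ : μ (Icc 0 1) = 1) (hN : 2 ≤ N)
    (hp : p < 1) (hinv : IsInvariantTopTwoMaps μ N p) :
    μ (Icc 0 ((N - 2) / (N - 1))) = 0 := by
  set a := (N - 2) / (N - 1)
  have haN : a * (N - 1) = N - 2 := div_mul_cancel₀ _ (by linarith)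
  obtain ⟨ha₀, ha₁⟩ := fixedPoint_mem_Ico hN
  have h := hinv _ (Icc_subset_Icc_right ha₁.le) measurableSet_Icc
  rw [preimage_add_div_Icc (by linarith), preimage_add_div_Icc (by linarith)] at h
  have hleft : μ (Icc (N * 0 - (N - 2)) (N * a - (N - 2))) ≤ μ (Icc 0 a) :=
    measure_le_of_inter_Icc_subset hμ fun y hy => ⟨hy.2.1, by linarith [hy.1.2]⟩
  have hright : μ (Icc (N * 0 - (N - 1)) (N * a - (N - 1))) = 0 :=
    nonpos_iff_eq_zero.mp <| (measure_le_of_inter_Icc_subset hμ fun y hy =>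
      absurd hy.2.1 (by linarith [hy.1.2])).trans_eq measure_empty
  rw [hright, mul_zero (ENNReal.ofReal _), add_zero] at h
  refine ENNReal.eq_zero_of_le_mul_self (ENNReal.ofReal_lt_one.mpr hp) (measure_ne_top _ _) ?_
  exact h.le.trans (by gcongr)

theorem IsInvariantTopTwoMaps.measure_Icc_fixedPoint_ne_zero (hμ : μ (Icc 0 1) = 1)
    (hN : 2 ≤ N) (hp : p ∈ Ioo 0 1) (hinv : IsInvariantTopTwoMaps μ N p) {c : ℝ}
    (hc : (N - 2) / (N - 1) < c) : μ (Icc ((N - 2) / (N - 1)) c) ≠ 0 := by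
  set a := (N - 2) / (N - 1)
  have haN : a * (N - 1) = N - 2 := div_mul_cancel₀ _ (by linarith)
  obtain ⟨ha₀, ha₁⟩ := fixedPoint_mem_Ico hN
  have hstep : ∀ d ≤ 1 - a, μ (Icc a (a + d)) = 0 → μ (Icc a (a + N * d)) = 0 := by
    intro d hd hnull
    have h := hinv (Icc a (a + d)) (Icc_subset_Icc ha₀ (by linarith)) measurableSet_Icc
    rw [hnull, preimage_add_div_Icc (by linarith), eq_comm, add_eq_zero, mul_eq_zero] at h
    have hpre : Icc (N * a - (N - 2)) (N * (a + d) - (N - 2)) = Icc a (a + N * d) := by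
      congr 1 <;> linarith
    exact hpre ▸ h.1.resolve_left (ENNReal.ofReal_pos.mpr hp.1).ne'
  intro hnull
  have hright : μ (Icc a (a + (1 - a))) = 0 :=
    of_le_imp_of_imp_mul (P := fun d => μ (Icc a (a + d)) = 0) (by linarith) (by linarith)
      (sub_pos.mpr hc) (fun _ _ hyx hx => measure_mono_null (Icc_subset_Icc_right (by linarith)) hx)
      hstep (by simpa using hnull)
  rw [add_sub_cancel] at hright
  have hcover : μ (Icc 0 1) ≤ μ (Icc 0 a) + μ (Icc a 1) := by
    rw [← Icc_union_Icc_eq_Icc ha₀ ha₁.le]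
    exact measure_union_le _ _
  rw [hμ, hinv.measure_Icc_zero_fixedPoint hμ hN hp.2, hright] at hcover
  simp at hcover

theorem IsInvariantTopTwoMaps.toReal_measure_Icc_zero_eq_zero (hμ : μ (Icc 0 1) = 1)
    (hN : 2 ≤ N) (hp : p < 1) (hinv : IsInvariantTopTwoMaps μ N p) {x : ℝ}
    (hx : x ≤ (N - 2) / (N - 1)) : (μ (Icc 0 x)).toReal = 0 := by
  rw [measure_mono_null (Icc_subset_Icc_right hx) (hinv.measure_Icc_zero_fixedPoint hμ hN hp),
    ENNReal.toReal_zero]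

theorem IsInvariantTopTwoMaps.toReal_measure_Icc_zero_pos (hμ : μ (Icc 0 1) = 1)
    (hN : 2 ≤ N) (hp : p ∈ Ioo 0 1) (hinv : IsInvariantTopTwoMaps μ N p) {x : ℝ}
    (hx : (N - 2) / (N - 1) < x) : 0 < (μ (Icc 0 x)).toReal :=
  ENNReal.toReal_pos (fun h => hinv.measure_Icc_fixedPoint_ne_zero hμ hN hp hx <|
    measure_mono_null (Icc_subset_Icc_left (fixedPoint_mem_Ico hN).1) h) (measure_ne_top _ _)

end InvariantMeasure

theorem add_div_two_pow_le_add_div_two_pow {x : ℝ} (hx : x ≤ 1) {i n k : ℕ} (hi : i ≤ n)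
    (hk : k < 2 ^ i) : (x + k) / 2 ^ i ≤ (x + 2 ^ n - 1) / 2 ^ n := by
  obtain ⟨j, rfl⟩ := Nat.exists_eq_add_of_le hi
  have hk' : (k : ℝ) + 1 ≤ 2 ^ i := by exact_mod_cast hk
  have hj : (1 : ℝ) ≤ 2 ^ j := one_le_pow₀ one_le_two
  have hkey : (x + k) * 2 ^ j ≤ x + 2 ^ i * 2 ^ j - 1 := by
    nlinarith [mul_nonneg (sub_nonneg.mpr hj) (sub_nonneg.mpr hx)]
  rw [div_le_div_iff₀ (by positivity) (by positivity), pow_add]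
  nlinarith [mul_le_mul_of_nonneg_left hkey (pow_nonneg zero_le_two i : (0 : ℝ) ≤ 2 ^ i)]

/-- `(x + 2 ^ n - 1) / 2 ^ n` is the largest argument of `Φ` in the sum. -/
theorem sum_sum_sub_eq_zero_iff {Φ : ℝ → ℝ} {a : ℝ} (hzero : ∀ y ≤ a, Φ y = 0)
    (hpos : ∀ y, a < y → 0 < Φ y) {n : ℕ} (ha : ((2 : ℝ) ^ n - 1) / 2 ^ n ≤ a) {x : ℝ}
    (hx : x ≤ 1) :
    ∑ i ∈ Finset.range (n + 1), ∑ k ∈ Finset.range (2 ^ i), (Φ ((x + k) / 2 ^ i) - Φ (k / 2 ^ i))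
      = 0 ↔ (x + 2 ^ n - 1) / 2 ^ n ≤ a := by
  have hle : ∀ i ∈ Finset.range (n + 1), ∀ k ∈ Finset.range (2 ^ i), ∀ y : ℝ, y ≤ 1 →
      (y + k) / 2 ^ i ≤ (y + 2 ^ n - 1) / 2 ^ n := fun i hi k hk y hy =>
    add_div_two_pow_le_add_div_two_pow hy (Nat.lt_succ_iff.mp (Finset.mem_range.mp hi))
      (Finset.mem_range.mp hk)
  have hΦ_nonneg : ∀ y, 0 ≤ Φ y := fun y =>
    (le_or_gt y a).elim (fun h => (hzero y h).ge) fun h => (hpos y h).le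
  have hsum : ∀ i ∈ Finset.range (n + 1),
      ∑ k ∈ Finset.range (2 ^ i), (Φ ((x + k) / 2 ^ i) - Φ (k / 2 ^ i))
        = ∑ k ∈ Finset.range (2 ^ i), Φ ((x + k) / 2 ^ i) := fun i hi =>
    Finset.sum_congr rfl fun k hk => by
      have hk_le := hle i hi k hk 0 zero_le_one
      rw [zero_add, zero_add] at hk_le
      rw [hzero (k / 2 ^ i) (hk_le.trans ha), sub_zero]
  rw [Finset.sum_congr rfl hsum, Finset.sum_eq_zero_iff_of_nonneg fun i _ =>
    Finset.sum_nonneg fun k _ => hΦ_nonneg _]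
  simp_rw [Finset.sum_eq_zero_iff_of_nonneg fun k _ => hΦ_nonneg _]
  constructor
  · intro h
    have hlast := h n (by simp) (2 ^ n - 1) (by simp)
    rw [Nat.cast_sub Nat.one_le_two_pow, ← add_sub_assoc] at hlast
    push_cast at hlast
    exact not_lt.mp fun hlt => (hpos _ hlt).ne' hlast
  · exact fun h i hi k hk => hzero _ ((hle i hi k hk x hx).trans h)

/-- For `m ≥ 2` and `μ` invariant for the IFS with probability vector
`P = (0,…,0,p,1−p)`, the MW-solution `φ` built from `Φ` vanishes at `x ∈ [0,1]` exactly
when `x ∈ [0, (2^m − 2^{m−1} − 1)/(2^m − 1)]`. -/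
theorem stmt_18 (m : ℕ) (hm : 2 ≤ m) (p : ℝ) (hp : p ∈ Set.Ioo (0:ℝ) 1)
    (μ : Measure ℝ) [IsProbabilityMeasure μ] (hμ : μ (Set.Icc (0:ℝ) 1) = 1)
    (hinv : ∀ B ⊆ Set.Icc (0:ℝ) 1, MeasurableSet B →
      μ B = ENNReal.ofReal p * μ ((fun x : ℝ => (x + (2 ^ m - 2 : ℕ)) / 2 ^ m) ⁻¹' B)
        + ENNReal.ofReal (1 - p) * μ ((fun x : ℝ => (x + (2 ^ m - 1 : ℕ)) / 2 ^ m) ⁻¹' B))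
    (Φ : ℝ → ℝ) (hΦ : ∀ x, Φ x = (μ (Set.Icc 0 x)).toReal)
    (φ : ℝ → ℝ)
    (hφ : ∀ x, φ x = (1 / m : ℝ) * ∑ i ∈ Finset.range m, ∑ k ∈ Finset.range (2 ^ i),
      (Φ ((x + k) / 2 ^ i) - Φ (k / 2 ^ i))) :
    ∀ x ∈ Set.Icc (0:ℝ) 1,
      (φ x = 0 ↔ x ≤ ((2 : ℝ) ^ m - (2 : ℝ) ^ (m - 1) - 1) / ((2 : ℝ) ^ m - 1)) := by
  obtain ⟨n, rfl⟩ : ∃ n, m = n + 1 := ⟨m - 1, by omega⟩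
  have hN : (2 : ℝ) ≤ 2 ^ (n + 1) := le_self_pow₀ one_le_two (by omega)
  have hinv' : IsInvariantTopTwoMaps μ (2 ^ (n + 1)) p := by
    intro B hB hBm
    have h2 : 2 ≤ 2 ^ (n + 1) := le_self_pow₀ one_le_two (by omega)
    simpa [Nat.cast_sub h2, Nat.cast_sub (one_le_two.trans h2)] using hinv B hB hBm
  have hM : (1 : ℝ) ≤ 2 ^ n := one_le_pow₀ one_le_two
  intro x hx
  rw [hφ, mul_eq_zero, or_iff_right (by positivity), sum_sum_sub_eq_zero_iff
    (fun y hy => (hΦ y).trans (hinv'.toReal_measure_Icc_zero_eq_zero hμ hN hp.2 hy))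
    (fun y hy => (hΦ y).symm ▸ hinv'.toReal_measure_Icc_zero_pos hμ hN hp hy) ?_ hx.2]
  · rw [Nat.add_sub_cancel, pow_succ, div_le_div_iff₀ (by positivity) (by linarith),
      le_div_iff₀ (by linarith)]
    constructor <;> intro h <;> nlinarith
  · rw [pow_succ, div_le_div_iff₀ (by positivity) (by linarith)]
    nlinarith
end
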